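/- arXiv:2312.16644 — 3 statements merged into one kernel-verified Lean document; each statement's English description precedes it below -/
import Mathlib

section
/- With $\tau$ and $\dim_\infty(\mathfrak{J})$ as defined from a set function $\mathfrak{J}$ on dyadic cubes, and $\mathfrak{q} = \inf\{q \ge 0 : \tau(q) < 0\}$: one has $\dim_\infty(\mathfrak{J}) > 0$ if and only if $\mathfrak{q} < \infty$. -/
/-! For `q ≥ 0` the partition sum `Zₙ(q) = ∑ 𝔍(Q)^q` and the maximal mass `Mₙ` satisfy
`Mₙ^q ≤ Zₙ(q) ≤ #𝒮ₙ · Mₙ^q ≤ 2^{nd} Mₙ^q`. Hence `dim_∞ ≥ ε > 0` forces `τ(q) ≤ d - qε < 0` for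
`q` large, while `τ(q) ≤ c < 0` gives `-c ≤ q · dim_∞`, which excludes `q = 0` and yields
`dim_∞ ≥ -c/q > 0`. -/

open Filter

noncomputable section

/-- The `𝔍`-partition function (convention `0^0 = 0`). -/
def tauFn {ι : Type*} (S : ℕ → Finset ι) (J : ι → ℝ) (q : ℝ) : EReal :=
  limsup (fun n : ℕ =>
    ((Real.log (∑ Q ∈ (S n).filter (fun Q => 0 < J Q), J Q ^ q) / (n * Real.log 2) : ℝ) : EReal))
    atTop

/-- The `∞`-dimension of `𝔍`. -/
def dimInf {ι : Type*} (S : ℕ → Finset ι) (hS : ∀ n, (S n).Nonempty) (J : ι → ℝ) : EReal :=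
  liminf (fun n : ℕ =>
    ((Real.log ((S n).sup' (hS n) J) / (-(n * Real.log 2)) : ℝ) : EReal)) atTop

theorem EReal.zero_lt_liminf_coe_iff {α : Type*} {l : Filter α} (u : α → ℝ) :
    0 < liminf (fun a => (u a : EReal)) l ↔ ∃ ε : ℝ, 0 < ε ∧ ∀ᶠ a in l, ε ≤ u a := by
  constructor
  · intro h
    obtain ⟨ε, hε, hεu⟩ := EReal.exists_between_coe_real h
    exact ⟨ε, mod_cast hε,
      (eventually_lt_of_lt_liminf hεu).mono fun a ha => (EReal.coe_lt_coe_iff.1 ha).le⟩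
  · rintro ⟨ε, hε, hεu⟩
    exact (EReal.coe_pos.2 hε).trans_le
      (le_liminf_of_le (by isBoundedDefault) (hεu.mono fun a ha => EReal.coe_le_coe_iff.2 ha))

theorem EReal.limsup_coe_lt_zero_iff {α : Type*} {l : Filter α} (u : α → ℝ) :
    limsup (fun a => (u a : EReal)) l < 0 ↔ ∃ c : ℝ, c < 0 ∧ ∀ᶠ a in l, u a ≤ c := by
  constructor
  · intro h
    obtain ⟨c, hcu, hc⟩ := EReal.exists_between_coe_real h
    exact ⟨c, mod_cast hc,
      (eventually_lt_of_limsup_lt hcu).mono fun a ha => (EReal.coe_lt_coe_iff.1 ha).le⟩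
  · rintro ⟨c, hc, hcu⟩
    exact (limsup_le_of_le (by isBoundedDefault)
      (hcu.mono fun a ha => EReal.coe_le_coe_iff.2 ha)).trans_lt (EReal.coe_neg'.2 hc)

theorem EReal.sInf_image_coe_lt_top_iff (s : Set ℝ) :
    sInf ((fun x : ℝ => (x : EReal)) '' s) < ⊤ ↔ s.Nonempty := by
  simp [sInf_lt_iff, Set.Nonempty]

namespace Finset

variable {ι : Type*} {s : Finset ι} {f : ι → ℝ}

theorem sup'_pos (hs : s.Nonempty) (hf : ∃ i ∈ s, 0 < f i) : 0 < s.sup' hs f := by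
  obtain ⟨i, hi, hfi⟩ := hf
  exact hfi.trans_le (s.le_sup' f hi)

theorem rpow_sup'_le_sum_filter_pos_rpow (hs : s.Nonempty) (hf : ∃ i ∈ s, 0 < f i) (q : ℝ) :
    s.sup' hs f ^ q ≤ ∑ i ∈ s.filter (fun i => 0 < f i), f i ^ q := by
  obtain ⟨j, hj, hjmax⟩ := s.exists_mem_eq_sup' hs f
  have hfj : 0 < f j := hjmax ▸ sup'_pos hs hf
  rw [hjmax]
  exact single_le_sum (fun k hk => (Real.rpow_pos_of_pos (mem_filter.1 hk).2 q).le)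
    (mem_filter.2 ⟨hj, hfj⟩)

theorem sum_filter_pos_rpow_le_card_mul (hs : s.Nonempty) (hf : ∃ i ∈ s, 0 < f i) {q : ℝ}
    (hq : 0 ≤ q) : ∑ i ∈ s.filter (fun i => 0 < f i), f i ^ q ≤ s.card * s.sup' hs f ^ q := by
  calc ∑ i ∈ s.filter (fun i => 0 < f i), f i ^ q
      ≤ ∑ _i ∈ s.filter (fun i => 0 < f i), s.sup' hs f ^ q := by
        refine sum_le_sum fun i hi => ?_
        rw [mem_filter] at hi
        exact Real.rpow_le_rpow hi.2.le (s.le_sup' f hi.1) hq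
    _ ≤ s.card * s.sup' hs f ^ q := by
        rw [sum_const, nsmul_eq_mul]
        have := (Real.rpow_pos_of_pos (sup'_pos hs hf) q).le
        gcongr
        exact filter_subset _ s

end Finset

section Scaling

open Real

variable {ι : Type*} {s : Finset ι} {f : ι → ℝ} {n : ℕ}

theorem log_sum_filter_pos_rpow_div_le (hs : s.Nonempty) (hf : ∃ i ∈ s, 0 < f i) {d : ℕ}
    (hcard : s.card ≤ 2 ^ (n * d)) (hn : 0 < n) {q ε : ℝ} (hq : 0 ≤ q)
    (hε : ε ≤ log (s.sup' hs f) / -(n * log 2)) :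
    log (∑ i ∈ s.filter (fun i => 0 < f i), f i ^ q) / (n * log 2) ≤ d - q * ε := by
  have hL : 0 < (n : ℝ) * log 2 := by positivity
  have hM := s.sup'_pos hs hf
  have hlogM : log (s.sup' hs f) ≤ -(ε * (n * log 2)) := by
    rwa [le_div_iff_of_neg (neg_neg_of_pos hL), mul_neg] at hε
  have hlogcard : log s.card ≤ d * (n * log 2) := by
    have hcard' : (s.card : ℝ) ≤ 2 ^ (n * d) := mod_cast hcard
    calc log s.card ≤ log (2 ^ (n * d)) :=
          log_le_log (mod_cast s.card_pos.2 hs) hcard'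
      _ = d * (n * log 2) := by rw [log_pow]; push_cast; ring
  rw [div_le_iff₀ hL]
  calc log (∑ i ∈ s.filter (fun i => 0 < f i), f i ^ q)
      ≤ log (s.card * s.sup' hs f ^ q) :=
        log_le_log (s.rpow_sup'_le_sum_filter_pos_rpow hs hf q |>.trans_lt' (by positivity))
          (s.sum_filter_pos_rpow_le_card_mul hs hf hq)
    _ = log s.card + q * log (s.sup' hs f) := by
        rw [log_mul (by positivity) (by positivity), log_rpow hM]
    _ ≤ d * (n * log 2) + q * -(ε * (n * log 2)) := by gcongr
    _ = (d - q * ε) * (n * log 2) := by ring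

theorem neg_le_mul_log_sup'_div (hs : s.Nonempty) (hf : ∃ i ∈ s, 0 < f i) (hn : 0 < n)
    {q c : ℝ} (hc : log (∑ i ∈ s.filter (fun i => 0 < f i), f i ^ q) / (n * log 2) ≤ c) :
    -c ≤ q * (log (s.sup' hs f) / -(n * log 2)) := by
  have hL : 0 < (n : ℝ) * log 2 := by positivity
  have hlogZ : q * log (s.sup' hs f) ≤ c * (n * log 2) := by
    rw [← log_rpow (s.sup'_pos hs hf), ← div_le_iff₀ hL]
    refine le_trans ?_ hc
    gcongr
    · exact Real.rpow_pos_of_pos (s.sup'_pos hs hf) q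
    · exact s.rpow_sup'_le_sum_filter_pos_rpow hs hf q
  rw [mul_div_assoc', div_neg, le_neg, neg_neg, div_le_iff₀ hL]
  exact hlogZ

end Scaling

theorem stmt3_general {ι : Type*} (d : ℕ) (S : ℕ → Finset ι) (hS : ∀ n, (S n).Nonempty) (J : ι → ℝ)
    (hcard : ∀ n, (S n).card ≤ 2 ^ (n * d))
    (hpos : ∀ n, ∃ Q ∈ S n, 0 < J Q) :
    0 < dimInf S hS J ↔
      sInf ((fun q : ℝ => (q : EReal)) '' {q : ℝ | 0 ≤ q ∧ tauFn S J q < 0}) < ⊤ := by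
  rw [EReal.sInf_image_coe_lt_top_iff, dimInf, EReal.zero_lt_liminf_coe_iff]
  constructor
  · rintro ⟨ε, hε, hdim⟩
    refine ⟨(d + 1) / ε, by positivity, (EReal.limsup_coe_lt_zero_iff _).2 ⟨-1, by norm_num, ?_⟩⟩
    filter_upwards [hdim, eventually_gt_atTop 0] with n hn hn0
    calc _ ≤ d - (d + 1) / ε * ε :=
          log_sum_filter_pos_rpow_div_le (hS n) (hpos n) (hcard n) hn0 (by positivity) hn
      _ = -1 := by field_simp; ring
  · rintro ⟨q, hq0, hτ⟩
    obtain ⟨c, hc, hτc⟩ := (EReal.limsup_coe_lt_zero_iff _).1 hτ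
    have hdim : ∀ᶠ n in atTop, -c ≤ q * (Real.log ((S n).sup' (hS n) J) / -(n * Real.log 2)) := by
      filter_upwards [hτc, eventually_gt_atTop 0] with n hn hn0
      exact neg_le_mul_log_sup'_div (hS n) (hpos n) hn0 hn
    have hq : 0 < q := by
      refine hq0.lt_of_ne' fun hq => ?_
      obtain ⟨n, hn⟩ := hdim.exists
      rw [hq, zero_mul] at hn
      linarith
    exact ⟨-c / q, div_pos (neg_pos.2 hc) hq, hdim.mono fun n hn => (div_le_iff₀' hq).2 hn⟩

/-- `dim_∞(𝔍) > 0` if and only if `𝔮 = inf {q ≥ 0 : τ(q) < 0} < ∞`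
(the infimum being taken in the extended reals, so that it is `⊤` iff the set is empty). -/
theorem stmt3 {ι : Type*} (d : ℕ) (S : ℕ → Finset ι) (hS : ∀ n, (S n).Nonempty) (J : ι → ℝ)
    (hJ : ∀ i, 0 ≤ J i)
    (hcard : ∀ n, (S n).card ≤ 2 ^ (n * d))
    (hpos : ∀ n, ∃ Q ∈ S n, 0 < J Q) :
    0 < dimInf S hS J ↔
      sInf ((fun q : ℝ => (q : EReal)) '' {q : ℝ | 0 ≤ q ∧ tauFn S J q < 0}) < ⊤ :=
  stmt3_general d S hS J hcard hpos

end
end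

section
/- Let $\mathfrak{J}$ be a set function on dyadic cubes with $\mathfrak{q} := \inf\{q \ge 0 : \tau(q) < 0\} < \infty$. Then the critical exponent $\kappa := \inf\{q \ge 0 : \sum_{Q \in \mathcal{S}} \mathfrak{J}(Q)^q < \infty\}$ equals $\mathfrak{q}$. -/
open Filter

noncomputable section

/-!
If `τ(q) < 0`, the generation sums `∑_{Q ∈ 𝒮ₙ} 𝔍(Q)^q` decay geometrically, so the sum over all
of `𝒮` converges; hence `κ ≤ 𝔮`. Conversely, `dim_∞(𝔍) > 0` gives `r < 1` with `𝔍(Q) ≤ rⁿ` for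
every cube of generation `n`, so raising the exponent from `q` to `q' > q` multiplies the `n`-th
generation sum by at most `(r^(q' - q))ⁿ`. If the sum converges at `q`, its generation sums are
bounded, and then `τ(q') ≤ (q' - q) log₂ r < 0`; hence `𝔮 ≤ κ`.
-/

lemma csInf_eq_csInf_of_subset_of_forall_lt_mem {α : Type*} [ConditionallyCompleteLinearOrder α]
    [DenselyOrdered α] {A B : Set α} (hA : BddBelow A)
    (hB : B.Nonempty) (hBA : B ⊆ A) (hAB : ∀ a ∈ A, ∀ b, a < b → b ∈ B) :
    sInf A = sInf B :=
  le_antisymm (csInf_le_csInf hA hB hBA) <|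
    le_csInf (hB.mono hBA) fun a ha =>
      le_of_forall_gt_imp_ge_of_dense fun b hb => csInf_le (hA.mono hBA) (hAB a ha b hb)

def growthExponent (a : ℕ → ℝ) : EReal :=
  limsup (fun n : ℕ => ((Real.log (a n) / (n * Real.log 2) : ℝ) : EReal)) atTop

section growthExponent

variable {a : ℕ → ℝ}

lemma eventually_le_rpow_pow_of_growthExponent_lt (ha : ∀ n, 0 ≤ a n) {c : ℝ}
    (h : growthExponent a < c) : ∀ᶠ n in atTop, a n ≤ ((2 : ℝ) ^ c) ^ n := by
  filter_upwards [eventually_lt_of_limsup_lt h, eventually_ge_atTop 1] with n hn hn1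
  rcases (ha n).eq_or_lt with hzero | hpos
  · rw [← hzero]
    positivity
  have hden : (0 : ℝ) < n * Real.log 2 := by
    have : (1 : ℝ) ≤ n := by exact_mod_cast hn1
    positivity
  have hlog : Real.log (a n) < Real.log (((2 : ℝ) ^ c) ^ n) := by
    rw [Real.log_pow, Real.log_rpow two_pos]
    have := (div_lt_iff₀ hden).1 (EReal.coe_lt_coe_iff.1 hn)
    linarith
  exact ((Real.log_lt_log_iff hpos (by positivity)).1 hlog).le

lemma summable_of_growthExponent_neg (ha : ∀ n, 0 ≤ a n) (h : growthExponent a < 0) :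
    Summable a := by
  obtain ⟨c, hc, hc0⟩ := EReal.exists_between_coe_real h
  have hr : (2 : ℝ) ^ c < 1 :=
    Real.rpow_lt_one_of_one_lt_of_neg one_lt_two (EReal.coe_lt_coe_iff.1 hc0)
  refine Summable.of_norm_bounded_eventually_nat
    (summable_geometric_of_lt_one (by positivity) hr) ?_
  filter_upwards [eventually_le_rpow_pow_of_growthExponent_lt ha hc] with n hn
  rwa [Real.norm_of_nonneg (ha n)]

lemma growthExponent_neg_of_eventually_le {C r : ℝ} (hC : 0 < C) (hr0 : 0 < r) (hr1 : r < 1)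
    (h : ∀ᶠ n in atTop, 0 < a n ∧ a n ≤ C * r ^ n) : growthExponent a < 0 := by
  set L : ℝ := Real.log r / Real.log 2
  have hlog2 : 0 < Real.log 2 := Real.log_pos one_lt_two
  have hL : L < 0 := div_neg_of_neg_of_pos (Real.log_neg hr0 hr1) hlog2
  have hsmall : ∀ᶠ n : ℕ in atTop, Real.log C / (n * Real.log 2) < -(L / 2) := by
    have : Tendsto (fun n : ℕ => Real.log C / Real.log 2 * (n : ℝ)⁻¹) atTop (nhds 0) := by
      simpa using tendsto_inv_atTop_nhds_zero_nat.const_mul (Real.log C / Real.log 2)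
    refine (this.eventually_lt_const (show (0 : ℝ) < -(L / 2) by linarith)).mono fun n hn => ?_
    rwa [div_mul_eq_div_div_swap, div_eq_mul_inv]
  have hbound : ∀ᶠ n : ℕ in atTop,
      ((Real.log (a n) / (n * Real.log 2) : ℝ) : EReal) ≤ ((L / 2 : ℝ) : EReal) := by
    filter_upwards [h, hsmall, eventually_ge_atTop 1] with n ⟨hpos, hle⟩ hsm hn1
    have hden : (0 : ℝ) < n * Real.log 2 := by
      have : (1 : ℝ) ≤ n := by exact_mod_cast hn1
      positivity
    have hlog : Real.log (a n) ≤ Real.log C + n * Real.log r := by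
      rw [← Real.log_pow, ← Real.log_mul hC.ne' (pow_pos hr0 n).ne']
      exact Real.log_le_log hpos hle
    have hsplit : (Real.log C + n * Real.log r) / (n * Real.log 2)
        = Real.log C / (n * Real.log 2) + L := by
      simp only [L]
      field_simp
    have := div_le_div_of_nonneg_right hlog hden.le
    exact EReal.coe_le_coe_iff.2 (by linarith)
  calc growthExponent a ≤ ((L / 2 : ℝ) : EReal) := limsup_le_of_le (by isBoundedDefault) hbound
    _ < 0 := EReal.coe_lt_coe_iff.2 (by linarith)

end growthExponent

def partitionSum {ι : Type*} (S : ℕ → Finset ι) (J : ι → ℝ) (q : ℝ) (n : ℕ) : ℝ :=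
  ∑ Q ∈ (S n).filter (fun Q => 0 < J Q), J Q ^ q

section partitionSum

variable {ι : Type*} {S : ℕ → Finset ι} {J : ι → ℝ}

lemma tauFn_eq_growthExponent (q : ℝ) : tauFn S J q = growthExponent (partitionSum S J q) :=
  rfl

lemma partitionSum_nonneg (q : ℝ) (n : ℕ) : 0 ≤ partitionSum S J q n :=
  Finset.sum_nonneg fun _ hQ => Real.rpow_nonneg (Finset.mem_filter.1 hQ).2.le q

lemma partitionSum_pos {n : ℕ} (hn : ∃ Q ∈ S n, 0 < J Q) (q : ℝ) : 0 < partitionSum S J q n := by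
  obtain ⟨Q, hQ, hJQ⟩ := hn
  exact Finset.sum_pos (fun Q hQ => Real.rpow_pos_of_pos (Finset.mem_filter.1 hQ).2 q)
    ⟨Q, Finset.mem_filter.2 ⟨hQ, hJQ⟩⟩

lemma partitionSum_le_pow_mul {r q q' : ℝ} {n : ℕ} (hr : 0 ≤ r) (hqq' : q ≤ q')
    (hJr : ∀ Q ∈ S n, J Q ≤ r ^ n) :
    partitionSum S J q' n ≤ (r ^ (q' - q)) ^ n * partitionSum S J q n := by
  rw [partitionSum, partitionSum, Finset.mul_sum]
  refine Finset.sum_le_sum fun Q hQ => ?_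
  obtain ⟨hQS, hJQ⟩ := Finset.mem_filter.1 hQ
  calc J Q ^ q' = J Q ^ (q' - q) * J Q ^ q := by
        rw [← Real.rpow_add hJQ, sub_add_cancel]
    _ ≤ (r ^ n) ^ (q' - q) * J Q ^ q := by
        gcongr
        exact hJr Q hQS
    _ = (r ^ (q' - q)) ^ n * J Q ^ q := by rw [Real.rpow_pow_comm hr]

lemma summable_sigma_iff_summable_partitionSum (q : ℝ) :
    Summable (fun p : (n : ℕ) × {Q : ι // Q ∈ S n ∧ 0 < J Q} => J p.2.1 ^ q) ↔
      Summable (partitionSum S J q) := by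
  have hfiber (n : ℕ) :
      ∑' Q : {Q : ι // Q ∈ S n ∧ 0 < J Q}, J Q.1 ^ q = partitionSum S J q n := by
    rw [partitionSum, ← Finset.tsum_subtype]
    exact (Equiv.subtypeEquivRight fun Q => Finset.mem_filter.symm).tsum_eq
      (fun Q : {Q // Q ∈ (S n).filter (fun Q => 0 < J Q)} => J Q.1 ^ q)
  have hfinite (n : ℕ) : Finite {Q : ι // Q ∈ S n ∧ 0 < J Q} :=
    ((S n).finite_toSet.subset fun Q hQ => hQ.1).to_subtype
  rw [summable_sigma_of_nonneg fun p => Real.rpow_nonneg p.2.2.2.le q]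
  exact ⟨fun h => h.2.congr hfiber, fun h => ⟨fun _ => .of_finite, h.congr fun n => (hfiber n).symm⟩⟩

end partitionSum

lemma exists_lt_one_eventually_le_pow_of_dimInf_pos {ι : Type*} {S : ℕ → Finset ι}
    {hS : ∀ n, (S n).Nonempty} {J : ι → ℝ} (hdim : 0 < dimInf S hS J) :
    ∃ r : ℝ, 0 < r ∧ r < 1 ∧ ∀ᶠ n in atTop, ∀ Q ∈ S n, J Q ≤ r ^ n := by
  obtain ⟨δ, hδ0, hδ⟩ := EReal.exists_between_coe_real hdim
  refine ⟨(2 : ℝ) ^ (-δ), by positivity,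
    Real.rpow_lt_one_of_one_lt_of_neg one_lt_two (neg_neg_of_pos (EReal.coe_pos.1 hδ0)), ?_⟩
  filter_upwards [eventually_lt_of_lt_liminf hδ, eventually_ge_atTop 1] with n hn hn1 Q hQ
  set M := (S n).sup' (hS n) J
  refine (Finset.le_sup' J hQ).trans ?_
  rcases le_or_gt M 0 with hM | hM
  · exact hM.trans (by positivity)
  have hden : -((n : ℝ) * Real.log 2) < 0 := by
    have : (1 : ℝ) ≤ n := by exact_mod_cast hn1
    have := Real.log_pos one_lt_two
    nlinarith
  have hlog : Real.log M < Real.log (((2 : ℝ) ^ (-δ)) ^ n) := by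
    rw [Real.log_pow, Real.log_rpow two_pos]
    have := (lt_div_iff_of_neg hden).1 (EReal.coe_lt_coe_iff.1 hn)
    linarith
  exact ((Real.log_lt_log_iff hM (by positivity)).1 hlog).le

lemma tauFn_neg_of_summable_of_lt {ι : Type*} {S : ℕ → Finset ι} {J : ι → ℝ}
    (hpos : ∀ n, ∃ Q ∈ S n, 0 < J Q) {r : ℝ} (hr0 : 0 < r) (hr1 : r < 1)
    (hJr : ∀ᶠ n in atTop, ∀ Q ∈ S n, J Q ≤ r ^ n) {q q' : ℝ}
    (hsum : Summable (partitionSum S J q)) (hqq' : q < q') : tauFn S J q' < 0 := by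
  rw [tauFn_eq_growthExponent]
  set C := ∑' n, partitionSum S J q n
  have hCle (n : ℕ) : partitionSum S J q n ≤ C :=
    hsum.le_tsum n fun j _ => partitionSum_nonneg q j
  refine growthExponent_neg_of_eventually_le (r := r ^ (q' - q))
    ((partitionSum_pos (hpos 0) q).trans_le (hCle 0)) (by positivity)
    (Real.rpow_lt_one hr0.le hr1 (sub_pos.2 hqq')) ?_
  filter_upwards [hJr] with n hn
  refine ⟨partitionSum_pos (hpos n) q', (partitionSum_le_pow_mul hr0.le hqq'.le hn).trans ?_⟩
  rw [mul_comm]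
  gcongr
  exact hCle n

theorem stmt4_general {ι : Type*} (S : ℕ → Finset ι) (hS : ∀ n, (S n).Nonempty) (J : ι → ℝ)
    (hpos : ∀ n, ∃ Q ∈ S n, 0 < J Q)
    (hdim : 0 < dimInf S hS J)
    (hne : {q : ℝ | 0 ≤ q ∧ tauFn S J q < 0}.Nonempty) :
    sInf {q : ℝ | 0 ≤ q ∧
        Summable (fun p : (n : ℕ) × {Q : ι // Q ∈ S n ∧ 0 < J Q} => J p.2.1 ^ q)} =
      sInf {q : ℝ | 0 ≤ q ∧ tauFn S J q < 0} := by
  obtain ⟨r, hr0, hr1, hJr⟩ := exists_lt_one_eventually_le_pow_of_dimInf_pos hdim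
  refine csInf_eq_csInf_of_subset_of_forall_lt_mem ⟨0, fun _ hq => hq.1⟩ hne ?_ ?_
  · rintro q ⟨hq0, hτ⟩
    exact ⟨hq0, (summable_sigma_iff_summable_partitionSum q).2
      (summable_of_growthExponent_neg (partitionSum_nonneg q) (tauFn_eq_growthExponent q ▸ hτ))⟩
  · rintro q ⟨hq0, hsum⟩ q' hqq'
    exact ⟨hq0.trans hqq'.le, tauFn_neg_of_summable_of_lt hpos hr0 hr1 hJr
      ((summable_sigma_iff_summable_partitionSum q).1 hsum) hqq'⟩

/-- If `dim_∞(𝔍) > 0` (so that `𝔮 = inf {q ≥ 0 : τ(q) < 0} < ∞`, i.e. the set is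
nonempty), then the critical exponent `κ = inf {q ≥ 0 : ∑_{Q ∈ S} 𝔍(Q)^q < ∞}` (the sum running
over all cubes of all generations with positive `𝔍`-value) equals `𝔮`. -/
theorem stmt4 {ι : Type*} (d : ℕ) (S : ℕ → Finset ι) (hS : ∀ n, (S n).Nonempty) (J : ι → ℝ)
    (hJ : ∀ i, 0 ≤ J i)
    (hcard : ∀ n, (S n).card ≤ 2 ^ (n * d))
    (hpos : ∀ n, ∃ Q ∈ S n, 0 < J Q)
    (hdim : 0 < dimInf S hS J)
    (hne : {q : ℝ | 0 ≤ q ∧ tauFn S J q < 0}.Nonempty) :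
    sInf {q : ℝ | 0 ≤ q ∧
        Summable (fun p : (n : ℕ) × {Q : ι // Q ∈ S n ∧ 0 < J Q} => J p.2.1 ^ q)} =
      sInf {q : ℝ | 0 ≤ q ∧ tauFn S J q < 0} :=
  stmt4_general S hS J hpos hdim hne

end
end

section
/- Let $\mathfrak{J}$ be a non-trivial, monotone, uniformly vanishing, locally non-vanishing set function on dyadic cubes $\mathcal{S}$ with critical exponent $\kappa = \inf\{q \ge 0 : \sum_{Q\in\mathcal{S}} \mathfrak{J}(Q)^q < \infty\} < \infty$. Then the upper partition entropy satisfies $\overline{h} := \limsup_{x\to\infty} \frac{\log \operatorname{card}(G_x)}{\log x} \le \kappa$. -/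
/-!
Every cube of `G_x` is one of the at most `2^d` children of a cube `Q'` with `𝔍(Q') ≥ 1/x`,
and each such `Q'` contributes at least `x^{-q}` to `∑_Q 𝔍(Q)^q`. Hence
`card G_x ≤ 2^d x^q ∑_Q 𝔍(Q)^q` whenever this sum converges, so
`log card G_x / log x ≤ q + O(1 / log x)`, and taking `q` down to `κ` gives the claim.
-/

open Filter Set

noncomputable section

/-- Validity of a dyadic-cube index of generation `p.1`: the cube lies in the unit cube. -/
def validQ (d : ℕ) (p : ℕ × (Fin d → ℕ)) : Prop := ∀ i, p.2 i < 2 ^ p.1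

/-- The dyadic parent of a cube index. -/
def parQ (d : ℕ) (p : ℕ × (Fin d → ℕ)) : ℕ × (Fin d → ℕ) := (p.1 - 1, fun i => p.2 i / 2)

/-- The minimal `x`-good partition `G_x`: cubes `Q` with `𝔍(Q) < 1/x` whose parent `Q'`
satisfies `𝔍(Q') ≥ 1/x`. -/
def goodPart (d : ℕ) (J : ℕ × (Fin d → ℕ) → ℝ) (x : ℝ) : Set (ℕ × (Fin d → ℕ)) :=
  {p | validQ d p ∧ 0 < p.1 ∧ J p < 1 / x ∧ 1 / x ≤ J (parQ d p)}

lemma validQ_parQ {d : ℕ} {p : ℕ × (Fin d → ℕ)} (h : validQ d p) : validQ d (parQ d p) := by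
  intro i
  have hpow : 2 ^ p.1 ≤ 2 ^ (p.1 - 1) * 2 := by
    rw [← pow_succ]
    exact Nat.pow_le_pow_right two_pos (by omega)
  have := h i
  simp only [parQ]
  omega

lemma eq_of_parQ_eq_of_mod_two_eq {d : ℕ} {p p' : ℕ × (Fin d → ℕ)} (hp : 0 < p.1)
    (hp' : 0 < p'.1) (hpar : parQ d p = parQ d p') (hmod : ∀ i, p.2 i % 2 = p'.2 i % 2) :
    p = p' := by
  simp only [parQ, Prod.mk.injEq, funext_iff] at hpar
  obtain ⟨hgen, hdiv⟩ := hpar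
  exact Prod.ext (by omega) (funext fun i => by have := hdiv i; have := hmod i; omega)

lemma card_filter_parQ_eq_le {d : ℕ} (G : Finset (ℕ × (Fin d → ℕ))) (hG : ∀ p ∈ G, 0 < p.1)
    (a : ℕ × (Fin d → ℕ)) : (G.filter (parQ d · = a)).card ≤ 2 ^ d := by
  let parity : ℕ × (Fin d → ℕ) → Fin d → Fin 2 := fun p i => ⟨p.2 i % 2, Nat.mod_lt _ two_pos⟩
  calc (G.filter (parQ d · = a)).card
      ≤ (Finset.univ : Finset (Fin d → Fin 2)).card := by
        refine Finset.card_le_card_of_injOn parity (fun _ _ => Finset.mem_coe.2 (Finset.mem_univ _))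
          fun p hp p' hp' heq => ?_
        simp only [Finset.mem_coe, Finset.mem_filter] at hp hp'
        exact eq_of_parQ_eq_of_mod_two_eq (hG p hp.1) (hG p' hp'.1) (hp.2.trans hp'.2.symm)
          fun i => congrArg Fin.val (congrFun heq i)
    _ = 2 ^ d := by simp

lemma card_le_two_pow_mul_card_image_parQ {d : ℕ} (G : Finset (ℕ × (Fin d → ℕ)))
    (hG : ∀ p ∈ G, 0 < p.1) : G.card ≤ 2 ^ d * (G.image (parQ d)).card :=
  Finset.card_le_mul_card_image G _ fun a _ => card_filter_parQ_eq_le G hG a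

lemma Finset.card_mul_le_tsum_subtype {ι : Type*} {S : Set ι} {f : ι → ℝ}
    (hf : Summable fun i : S => f i) (hf0 : ∀ i ∈ S, 0 ≤ f i) {t : ℝ} (P : Finset ι)
    (hP : ∀ i ∈ P, i ∈ S ∧ t ≤ f i) : P.card * t ≤ ∑' i : S, f i := by
  classical
  let P' : Finset S := P.subtype (· ∈ S)
  have hcard : P'.card = P.card := by
    rw [Finset.card_subtype, Finset.filter_true_of_mem fun i hi => (hP i hi).1]
  calc (P.card : ℝ) * t = P'.card • t := by rw [hcard, nsmul_eq_mul]
    _ ≤ ∑ i ∈ P', f i := Finset.card_nsmul_le_sum _ _ _ fun i hi =>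
        (hP i (Finset.mem_subtype.1 hi)).2
    _ ≤ ∑' i : S, f i := hf.sum_le_tsum _ fun i _ => hf0 i i.2

lemma ncard_goodPart_le {d : ℕ} {J : ℕ × (Fin d → ℕ) → ℝ} {q x : ℝ} (hq : 0 ≤ q)
    (hsum : Summable fun p : {p : ℕ × (Fin d → ℕ) // validQ d p ∧ 0 < J p} => J p.1 ^ q)
    (hx : 0 < x) :
    ((goodPart d J x).ncard : ℝ) ≤
      2 ^ d * (∑' p : {p : ℕ × (Fin d → ℕ) // validQ d p ∧ 0 < J p}, J p.1 ^ q) * x ^ q := by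
  set C := ∑' p : {p : ℕ × (Fin d → ℕ) // validQ d p ∧ 0 < J p}, J p.1 ^ q
  have hC : 0 ≤ C := tsum_nonneg fun p => Real.rpow_nonneg p.2.2.le q
  by_cases hfin : (goodPart d J x).Finite
  swap
  -- `ncard` of an infinite set is `0`.
  · rw [Set.Infinite.ncard hfin, Nat.cast_zero]
    positivity
  set G := hfin.toFinset
  have hG : ∀ p ∈ G, p ∈ goodPart d J x := fun p => hfin.mem_toFinset.1
  have hparents : ∀ a ∈ G.image (parQ d),
      a ∈ {p | validQ d p ∧ 0 < J p} ∧ (1 / x) ^ q ≤ J a ^ q := by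
    simp only [Finset.mem_image]
    rintro _ ⟨p, hp, rfl⟩
    obtain ⟨hvalid, -, -, hparent⟩ := hG p hp
    exact ⟨⟨validQ_parQ hvalid, (one_div_pos.2 hx).trans_le hparent⟩,
      Real.rpow_le_rpow (one_div_pos.2 hx).le hparent hq⟩
  have hR : ((G.image (parQ d)).card : ℝ) * (x ^ q)⁻¹ ≤ C := by
    rw [← Real.inv_rpow hx.le, ← one_div]
    exact Finset.card_mul_le_tsum_subtype hsum (fun p hp => Real.rpow_nonneg hp.2.le q) _ hparents
  have hRcard : ((G.image (parQ d)).card : ℝ) ≤ C * x ^ q := by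
    rwa [← div_eq_mul_inv, div_le_iff₀ (Real.rpow_pos_of_pos hx q)] at hR
  rw [Set.ncard_eq_toFinset_card _ hfin, mul_assoc]
  calc (G.card : ℝ) ≤ 2 ^ d * (G.image (parQ d)).card := by
        exact_mod_cast card_le_two_pow_mul_card_image_parQ G fun p hp => (hG p hp).2.1
    _ ≤ 2 ^ d * (C * x ^ q) := by gcongr

lemma limsup_log_div_log_le_of_le_mul_rpow {n : ℝ → ℕ} {B q : ℝ} (hq : 0 ≤ q)
    (hn : ∀ᶠ x in atTop, (n x : ℝ) ≤ B * x ^ q) :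
    limsup (fun x => ((Real.log (n x) / Real.log x : ℝ) : EReal)) atTop ≤ q := by
  set B' := max B 1
  have hbound : ∀ᶠ x in atTop, Real.log (n x) / Real.log x ≤ q + Real.log B' / Real.log x := by
    filter_upwards [hn, eventually_gt_atTop 1] with x hnx hx
    have hlogx : 0 < Real.log x := Real.log_pos hx
    have hxq : 1 ≤ x ^ q := Real.one_le_rpow hx.le hq
    have hnB' : (n x : ℝ) ≤ B' * x ^ q :=
      hnx.trans (mul_le_mul_of_nonneg_right (le_max_left _ _) (by positivity))
    have hlog : Real.log (n x) ≤ Real.log B' + q * Real.log x := by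
      rw [← Real.log_rpow (by positivity), ← Real.log_mul (by positivity) (by positivity)]
      rcases (n x).eq_zero_or_pos with h0 | h0
      · rw [h0, Nat.cast_zero, Real.log_zero]
        exact Real.log_nonneg (one_le_mul_of_one_le_of_one_le (le_max_right _ _) hxq)
      · exact Real.log_le_log (by exact_mod_cast h0) hnB'
    rw [div_le_iff₀ hlogx, add_mul, div_mul_cancel₀ _ hlogx.ne']
    linarith
  have hlim : Tendsto (fun x => ((q + Real.log B' / Real.log x : ℝ) : EReal)) atTop (nhds q) := by
    have hvanish : Tendsto (fun x => Real.log B' / Real.log x) atTop (nhds 0) :=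
      tendsto_const_nhds.div_atTop Real.tendsto_log_atTop
    simpa using EReal.tendsto_coe.2 (tendsto_const_nhds.add hvanish)
  calc limsup (fun x => ((Real.log (n x) / Real.log x : ℝ) : EReal)) atTop
      ≤ limsup (fun x => ((q + Real.log B' / Real.log x : ℝ) : EReal)) atTop :=
        limsup_le_limsup (hbound.mono fun _ h => EReal.coe_le_coe_iff.2 h)
    _ = q := hlim.limsup_eq

lemma EReal.le_coe_sInf {S : Set ℝ} (hS : S.Nonempty) {a : EReal} (h : ∀ q ∈ S, a ≤ q) :
    a ≤ (sInf S : ℝ) := by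
  induction a using EReal.rec with
  | bot => exact bot_le
  | coe r => exact EReal.coe_le_coe_iff.2 (le_csInf hS fun q hq => EReal.coe_le_coe_iff.1 (h q hq))
  | top =>
    obtain ⟨q, hq⟩ := hS
    exact absurd (h q hq) (not_le.2 (EReal.coe_lt_top q))

theorem stmt9_general (d : ℕ) (J : ℕ × (Fin d → ℕ) → ℝ)
    (hκ : {q : ℝ | 0 ≤ q ∧
      Summable (fun p : {p : ℕ × (Fin d → ℕ) // validQ d p ∧ 0 < J p} => J p.1 ^ q)}.Nonempty) :
    limsup (fun x : ℝ =>
        ((Real.log ((goodPart d J x).ncard) / Real.log x : ℝ) : EReal)) atTop ≤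
      ((sInf {q : ℝ | 0 ≤ q ∧
        Summable (fun p : {p : ℕ × (Fin d → ℕ) // validQ d p ∧ 0 < J p} => J p.1 ^ q)} : ℝ) :
        EReal) := by
  refine EReal.le_coe_sInf hκ fun q ⟨hq, hsum⟩ => ?_
  exact limsup_log_div_log_le_of_le_mul_rpow hq <|
    (eventually_gt_atTop 0).mono fun x hx => ncard_goodPart_le hq hsum hx

/-- For a non-trivial, monotone, uniformly vanishing, locally non-vanishing
set function `𝔍` on dyadic cubes with finite critical exponent
`κ = inf {q ≥ 0 : ∑_{Q} 𝔍(Q)^q < ∞}` (the sum over cubes with positive `𝔍`-value), the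
upper partition entropy satisfies `limsup_{x→∞} log card(G_x) / log x ≤ κ`. -/
theorem stmt9 (d : ℕ) (hd : 0 < d) (J : ℕ × (Fin d → ℕ) → ℝ)
    (hJ0 : ∀ p, 0 ≤ J p)
    (hnt : ∃ p, validQ d p ∧ 0 < J p)
    (hmono : ∀ p, validQ d p → 0 < p.1 → J p ≤ J (parQ d p))
    (huv : ∀ ε > (0 : ℝ), ∃ N : ℕ, ∀ p, validQ d p → N ≤ p.1 → J p < ε)
    (hlnv : ∀ p, validQ d p → 0 < J p →
      ∃ j : Fin d → Fin 2, 0 < J (p.1 + 1, fun i => 2 * p.2 i + (j i : ℕ)))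
    (hκ : {q : ℝ | 0 ≤ q ∧
      Summable (fun p : {p : ℕ × (Fin d → ℕ) // validQ d p ∧ 0 < J p} => J p.1 ^ q)}.Nonempty) :
    limsup (fun x : ℝ =>
        ((Real.log ((goodPart d J x).ncard) / Real.log x : ℝ) : EReal)) atTop ≤
      ((sInf {q : ℝ | 0 ≤ q ∧
        Summable (fun p : {p : ℕ × (Fin d → ℕ) // validQ d p ∧ 0 < J p} => J p.1 ^ q)} : ℝ) :
        EReal) :=
  stmt9_general d J hκ

end
end
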